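/- Let r > 0, λ > 0, {v₀,v₁,w} a positive oriented orthonormal system, k₀ = √(1+r²)/r, and α(t) = √(1+r²) w + r cos(λt/r) v₁ + r sin(λt/r) v₀. Then for all t: D_t α̇(t) = |α̇(t)|ₘ k₀ (α(t) ×ₘ α̇(t)) and D_t(α ×ₘ α̇)(t) = −|α̇(t)|ₘ k₀ α̇(t), where for a vector field V along α with ⟨V(t), α(t)⟩ₘ = 0 the covariant derivative on ℍ is D_tV(t) = V̇(t) + ⟨V̇(t), α(t)⟩ₘ α(t), and |α̇|ₘ = √⟨α̇,α̇⟩ₘ. -/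

import Mathlib

/-!
In the rotated frame `e₀ = cos θ • v₀ - sin θ • v₁`, `e₁ = sin θ • v₀ + cos θ • v₁`, which is
again positive oriented orthonormal, the curve is `α = a • w + r • e₁` with `a = √(1 + r²)` and
`θ = λ t / r`. Hence `α̇ = λ • e₀`, `α̈ = -(λ² / r) • e₁` and `α ×ₘ α̇ = -λ • (a • e₁ + r • w)`,
and both identities reduce to the multiplication table of the frame together with `a² = 1 + r²`.
-/

noncomputable section

open Real

/-- The Minkowski inner product on ℝ³. -/
def mink (v w : Fin 3 → ℝ) : ℝ := v 0 * w 0 + v 1 * w 1 - v 2 * w 2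

/-- The twisted cross product on ℝ³. -/
def mcross (v w : Fin 3 → ℝ) : Fin 3 → ℝ :=
  ![v 2 * w 1 - v 1 * w 2, v 0 * w 2 - v 2 * w 0, v 0 * w 1 - v 1 * w 0]

/-- A positive oriented orthonormal system with respect to the Minkowski metric. -/
def posOrth (v₀ v₁ w : Fin 3 → ℝ) : Prop :=
  mink v₀ v₁ = 0 ∧ mink v₀ w = 0 ∧ mink v₁ w = 0 ∧
  mink v₀ v₀ = 1 ∧ mink v₁ v₁ = 1 ∧ mink w w = -1 ∧
  mcross v₀ v₁ = w

/-- Membership in the hyperbolic plane ℍ ⊂ ℝ³. -/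
def inH (x : Fin 3 → ℝ) : Prop := x 2 ^ 2 - x 0 ^ 2 - x 1 ^ 2 = 1 ∧ 0 < x 2

/-- The covariant derivative on ℍ of a tangent vector field `V` along a curve `γ` in ℍ:
`D_t V(t) = V̇(t) + ⟨V̇(t), γ(t)⟩ₘ γ(t)`. -/
def covDt (γ V : ℝ → Fin 3 → ℝ) : ℝ → Fin 3 → ℝ :=
  fun t => deriv V t + mink (deriv V t) (γ t) • γ t

section Algebra

variable (u v w : Fin 3 → ℝ) (c : ℝ)

lemma mink_comm : mink v w = mink w v := by
  unfold mink; ring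

@[simp] lemma mink_add_left : mink (u + v) w = mink u w + mink v w := by
  simp only [mink, Pi.add_apply]; ring

@[simp] lemma mink_add_right : mink u (v + w) = mink u v + mink u w := by
  simp only [mink, Pi.add_apply]; ring

@[simp] lemma mink_sub_left : mink (u - v) w = mink u w - mink v w := by
  simp only [mink, Pi.sub_apply]; ring

@[simp] lemma mink_sub_right : mink u (v - w) = mink u v - mink u w := by
  simp only [mink, Pi.sub_apply]; ring

@[simp] lemma mink_smul_left : mink (c • v) w = c * mink v w := by
  simp only [mink, Pi.smul_apply, smul_eq_mul]; ring

@[simp] lemma mink_smul_right : mink v (c • w) = c * mink v w := by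
  simp only [mink, Pi.smul_apply, smul_eq_mul]; ring

@[simp] lemma mcross_add_left : mcross (u + v) w = mcross u w + mcross v w := by
  funext i; fin_cases i <;> simp [mcross] <;> ring

@[simp] lemma mcross_add_right : mcross u (v + w) = mcross u v + mcross u w := by
  funext i; fin_cases i <;> simp [mcross] <;> ring

@[simp] lemma mcross_sub_left : mcross (u - v) w = mcross u w - mcross v w := by
  funext i; fin_cases i <;> simp [mcross] <;> ring

@[simp] lemma mcross_smul_left : mcross (c • v) w = c • mcross v w := by
  funext i; fin_cases i <;> simp [mcross] <;> ring

@[simp] lemma mcross_smul_right : mcross v (c • w) = c • mcross v w := by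
  funext i; fin_cases i <;> simp [mcross] <;> ring

@[simp] lemma mcross_self : mcross v v = 0 := by
  funext i; fin_cases i <;> simp [mcross] <;> ring

lemma mcross_anticomm : mcross v w = -mcross w v := by
  funext i; fin_cases i <;> simp [mcross] <;> ring

lemma mcross_mcross : mcross u (mcross v w) = mink u v • w - mink u w • v := by
  funext i; fin_cases i <;> simp [mcross, mink] <;> ring

end Algebra

namespace posOrth

variable {v₀ v₁ w : Fin 3 → ℝ}

lemma mcross_v₁_v₀ (h : posOrth v₀ v₁ w) : mcross v₁ v₀ = -w := by
  rw [mcross_anticomm, h.2.2.2.2.2.2]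

lemma mcross_w_v₀ (h : posOrth v₀ v₁ w) : mcross w v₀ = -v₁ := by
  obtain ⟨h01, -, -, h00, -, -, hcross⟩ := h
  rw [← hcross, mcross_anticomm, mcross_mcross, h00, h01]
  simp

end posOrth

def rot₀ (v₀ v₁ : Fin 3 → ℝ) (θ : ℝ) : Fin 3 → ℝ := cos θ • v₀ - sin θ • v₁

def rot₁ (v₀ v₁ : Fin 3 → ℝ) (θ : ℝ) : Fin 3 → ℝ := sin θ • v₀ + cos θ • v₁

theorem posOrth.rot {v₀ v₁ w : Fin 3 → ℝ} (h : posOrth v₀ v₁ w) (θ : ℝ) :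
    posOrth (rot₀ v₀ v₁ θ) (rot₁ v₀ v₁ θ) w := by
  have hx10 := h.mcross_v₁_v₀
  obtain ⟨h01, h0w, h1w, h00, h11, hww, hx01⟩ := h
  have h10 : mink v₁ v₀ = 0 := by rw [mink_comm, h01]
  refine ⟨?_, ?_, ?_, ?_, ?_, hww, ?_⟩ <;>
    simp only [rot₀, rot₁, mink_add_left, mink_add_right, mink_sub_left, mink_sub_right,
      mink_smul_left, mink_smul_right, mcross_add_right, mcross_sub_left, mcross_smul_left,
      mcross_smul_right, mcross_self, h01, h10, h0w, h1w, h00, h11, hx01, hx10]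
  · ring
  · ring
  · ring
  · linear_combination cos_sq_add_sin_sq θ
  · linear_combination sin_sq_add_cos_sq θ
  · linear_combination (norm := module) (cos_sq_add_sin_sq θ) • w

section Derivatives

variable {v₀ v₁ : Fin 3 → ℝ} {f : ℝ → ℝ} {f' t : ℝ}

theorem HasDerivAt.rot₀ (hf : HasDerivAt f f' t) :
    HasDerivAt (fun s => _root_.rot₀ v₀ v₁ (f s)) (-f' • _root_.rot₁ v₀ v₁ (f t)) t :=
  ((hf.cos.smul_const v₀).sub (hf.sin.smul_const v₁)).congr_deriv
    (by simp only [_root_.rot₁]; module)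

theorem HasDerivAt.rot₁ (hf : HasDerivAt f f' t) :
    HasDerivAt (fun s => _root_.rot₁ v₀ v₁ (f s)) (f' • _root_.rot₀ v₀ v₁ (f t)) t :=
  ((hf.sin.smul_const v₀).add (hf.cos.smul_const v₁)).congr_deriv
    (by simp only [_root_.rot₀]; module)

end Derivatives

/-- The paper's circle `α` with `a = √(1 + r²)`; its speed is `|lam|`. -/
def hypCircle (a r lam : ℝ) (v₀ v₁ w : Fin 3 → ℝ) (t : ℝ) : Fin 3 → ℝ :=
  a • w + r • rot₁ v₀ v₁ (lam * t / r)

section HypCircle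

variable {a r lam : ℝ} {v₀ v₁ w : Fin 3 → ℝ} (t : ℝ)

local notation "α" => hypCircle a r lam v₀ v₁ w
local notation "θ" => lam * t / r

lemma hasDerivAt_angle : HasDerivAt (fun s => lam * s / r) (lam / r) t := by
  simpa using ((hasDerivAt_id t).const_mul lam).div_const r

lemma hasDerivAt_hypCircle (hr : r ≠ 0) : HasDerivAt α (lam • rot₀ v₀ v₁ θ) t :=
  (((hasDerivAt_angle t).rot₁.const_smul r).const_add (a • w)).congr_deriv
    (by rw [smul_smul, mul_div_cancel₀ _ hr])

lemma deriv_hypCircle (hr : r ≠ 0) : deriv α = fun s => lam • rot₀ v₀ v₁ (lam * s / r) :=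
  funext fun s => (hasDerivAt_hypCircle s hr).deriv

lemma hasDerivAt_deriv_hypCircle (hr : r ≠ 0) :
    HasDerivAt (deriv α) (-(lam ^ 2 / r) • rot₁ v₀ v₁ θ) t := by
  rw [deriv_hypCircle hr]
  exact ((hasDerivAt_angle t).rot₀.const_smul lam).congr_deriv (by module)

lemma mink_deriv_hypCircle (h : posOrth v₀ v₁ w) (hr : r ≠ 0) :
    mink (deriv α t) (deriv α t) = lam ^ 2 := by
  rw [deriv_hypCircle hr]
  simp only [mink_smul_left, mink_smul_right, (h.rot θ).2.2.2.1]
  ring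

lemma mcross_hypCircle_deriv (h : posOrth v₀ v₁ w) (hr : r ≠ 0) :
    mcross (α t) (deriv α t) = -lam • (a • rot₁ v₀ v₁ θ + r • w) := by
  have frame := h.rot θ
  rw [deriv_hypCircle hr]
  simp only [hypCircle, mcross_add_left, mcross_smul_left, mcross_smul_right,
    frame.mcross_w_v₀, frame.mcross_v₁_v₀]
  module

lemma hasDerivAt_mcross_hypCircle_deriv (h : posOrth v₀ v₁ w) (hr : r ≠ 0) :
    HasDerivAt (fun s => mcross (α s) (deriv α s))
      (-(lam ^ 2 * a / r) • rot₀ v₀ v₁ θ) t := by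
  simp only [mcross_hypCircle_deriv _ h hr]
  exact (((hasDerivAt_angle t).rot₁.const_smul a).add_const (r • w)).const_smul (-lam)
    |>.congr_deriv (by module)

theorem covDt_hypCircle_deriv (h : posOrth v₀ v₁ w) (hr : r ≠ 0) (ha : a ^ 2 = 1 + r ^ 2) :
    covDt α (deriv α) t = (lam * (a / r)) • mcross (α t) (deriv α t) := by
  obtain ⟨-, -, h1w, -, h11, -, -⟩ := h.rot θ
  rw [covDt, (hasDerivAt_deriv_hypCircle t hr).deriv, mcross_hypCircle_deriv t h hr]
  simp only [hypCircle, mink_smul_left, mink_add_right, mink_smul_right, h1w, h11]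
  match_scalars
  · field_simp
    linear_combination lam ^ 2 * ha
  · field_simp
    ring

theorem covDt_hypCircle_mcross (h : posOrth v₀ v₁ w) (hr : r ≠ 0) :
    covDt α (fun s => mcross (α s) (deriv α s)) t = -((lam * (a / r)) • deriv α t) := by
  obtain ⟨h01, h0w, -, -, -, -, -⟩ := h.rot θ
  rw [covDt, (hasDerivAt_mcross_hypCircle_deriv t h hr).deriv, deriv_hypCircle hr]
  simp only [hypCircle, mink_smul_left, mink_add_right, mink_smul_right, h0w, h01]
  module

end HypCircle

/-- the covariant derivatives of α̇ and of α ×ₘ α̇ along the circle α. -/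
theorem stmt_7 (r lam : ℝ) (hr : 0 < r) (hlam : 0 < lam) (v₀ v₁ w : Fin 3 → ℝ)
    (hsys : posOrth v₀ v₁ w) :
    let k₀ : ℝ := Real.sqrt (1 + r ^ 2) / r
    let α : ℝ → Fin 3 → ℝ := fun t =>
      Real.sqrt (1 + r ^ 2) • w + (r * Real.cos (lam * t / r)) • v₁ +
        (r * Real.sin (lam * t / r)) • v₀
    ∀ t : ℝ,
      covDt α (deriv α) t =
        (Real.sqrt (mink (deriv α t) (deriv α t)) * k₀) • mcross (α t) (deriv α t) ∧
      covDt α (fun s => mcross (α s) (deriv α s)) t =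
        -((Real.sqrt (mink (deriv α t) (deriv α t)) * k₀) • deriv α t) := by
  intro k₀ α t
  have hα : α = hypCircle (√(1 + r ^ 2)) r lam v₀ v₁ w := by
    funext s
    simp only [α, hypCircle, rot₁]
    module
  have hspeed : √(mink (deriv α t) (deriv α t)) * k₀ = lam * (√(1 + r ^ 2) / r) := by
    rw [hα, mink_deriv_hypCircle t hsys hr.ne', sqrt_sq hlam.le]
  rw [hspeed, hα]
  exact ⟨covDt_hypCircle_deriv t hsys hr.ne' (sq_sqrt (by positivity)),
    covDt_hypCircle_mcross t hsys hr.ne'⟩
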